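/- Under the convex-body generative model where z_x is uniform on a convex body Z_c, p(z_t|z_x) = C_p(z_x)^{-1} exp(−δ(z_t, z_x)/λ), and the inference conditional is q_h(z_t|z_x) = C_q(z_x)^{-1} exp(−δ(h(z_t), h(z_x))/τ): if p(z_t|z_x) = q_h(z_t|z_x) for all z_x, z_t in Z_c, then C_p(z_x) = C_q(z_x) for all z_x, and δ(z_x, z_t) = (λ/τ)·δ(h(z_x), h(z_t)) for all z_x, z_t ∈ Z_c. -/

import Mathlib

open Real

section ConditionalMatching

variable {α : Type*} {S : Set α} {dp dq : α → α → ℝ} {cp cq : α → ℝ} {lam τ : ℝ}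

/-- On the diagonal both exponents vanish, so the two normalizers must coincide. -/
lemma normalizer_eq_of_conditional_eq (hp : ∀ z, dp z z = 0) (hq : ∀ z, dq z z = 0)
    (heq : ∀ zx ∈ S, ∀ zt ∈ S,
      (cp zx)⁻¹ * exp (-(dp zt zx) / lam) = (cq zx)⁻¹ * exp (-(dq zt zx) / τ)) :
    ∀ zx ∈ S, cp zx = cq zx := by
  intro zx hzx
  have hdiag := heq zx hzx zx hzx
  simp only [hp, hq, neg_zero, zero_div, exp_zero, mul_one] at hdiag
  exact inv_injective hdiag

lemma exponent_eq_of_conditional_eq (hc : ∀ z ∈ S, cq z ≠ 0)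
    (hcpq : ∀ z ∈ S, cp z = cq z)
    (heq : ∀ zx ∈ S, ∀ zt ∈ S,
      (cp zx)⁻¹ * exp (-(dp zt zx) / lam) = (cq zx)⁻¹ * exp (-(dq zt zx) / τ)) :
    ∀ zx ∈ S, ∀ zt ∈ S, -(dp zt zx) / lam = -(dq zt zx) / τ := by
  intro zx hzx zt hzt
  have hdens := heq zx hzx zt hzt
  rw [hcpq zx hzx] at hdens
  exact exp_injective (mul_left_cancel₀ (inv_ne_zero (hc zx hzx)) hdens)

end ConditionalMatching

lemma eq_div_mul_of_neg_div_eq_neg_div {a b lam τ : ℝ} (hlam : lam ≠ 0)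
    (h : -a / lam = -b / τ) : a = lam / τ * b :=
  calc a = -lam * (-a / lam) := by field_simp
    _ = -lam * (-b / τ) := by rw [h]
    _ = lam / τ * b := by ring

theorem stmt13_general {M : ℕ} (lam τ : ℝ) (hlam : 0 < lam)
    (Zc : Set (EuclideanSpace ℝ (Fin M)))
    -- a metric `δ` induced by a norm `s`
    (s : Seminorm ℝ (EuclideanSpace ℝ (Fin M)))
    (δ : EuclideanSpace ℝ (Fin M) → EuclideanSpace ℝ (Fin M) → ℝ)
    (hδ : ∀ x y, δ x y = s (x - y))
    (h : EuclideanSpace ℝ (Fin M) → EuclideanSpace ℝ (Fin M))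
    (Cp Cq : EuclideanSpace ℝ (Fin M) → ℝ)
    (hCq : ∀ zx ∈ Zc, 0 < Cq zx)
    (heq : ∀ zx ∈ Zc, ∀ zt ∈ Zc,
      (Cp zx)⁻¹ * Real.exp (-(δ zt zx) / lam)
        = (Cq zx)⁻¹ * Real.exp (-(δ (h zt) (h zx)) / τ)) :
    (∀ zx ∈ Zc, Cp zx = Cq zx) ∧
    (∀ zx ∈ Zc, ∀ zt ∈ Zc, δ zx zt = (lam / τ) * δ (h zx) (h zt)) := by
  have hdiag : ∀ z, δ z z = 0 := fun z => by rw [hδ, sub_self, map_zero]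
  have hCpq := normalizer_eq_of_conditional_eq hdiag (fun z => hdiag (h z)) heq
  refine ⟨hCpq, fun zx hzx zt hzt => ?_⟩
  exact eq_div_mul_of_neg_div_eq_neg_div hlam.ne'
    (exponent_eq_of_conditional_eq (fun z hz => (hCq z hz).ne') hCpq heq zt hzt zx hzx)

/-- Matching conditionals on a convex body: if the generative conditional
`C_p(z_x)⁻¹ exp (−δ(z_t, z_x)/λ)` equals the inference conditional
`C_q(z_x)⁻¹ exp (−δ(h z_t, h z_x)/τ)` for all points of a convex body `Z_c`, where `δ`
is a metric induced by a norm, then the normalizers agree on `Z_c`, and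
`δ(z_x, z_t) = (λ/τ) δ(h z_x, h z_t)` on `Z_c` (so `h` is a scaled isometry). -/
theorem stmt13 {M : ℕ} (lam τ : ℝ) (hlam : 0 < lam) (hτ : 0 < τ)
    (Zc : Set (EuclideanSpace ℝ (Fin M)))
    (hcomp : IsCompact Zc) (hconv : Convex ℝ Zc) (hint : (interior Zc).Nonempty)
    -- a metric `δ` induced by a norm `s`
    (s : Seminorm ℝ (EuclideanSpace ℝ (Fin M))) (hs : ∀ x, s x = 0 → x = 0)
    (δ : EuclideanSpace ℝ (Fin M) → EuclideanSpace ℝ (Fin M) → ℝ)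
    (hδ : ∀ x y, δ x y = s (x - y))
    (h : EuclideanSpace ℝ (Fin M) → EuclideanSpace ℝ (Fin M))
    (Cp Cq : EuclideanSpace ℝ (Fin M) → ℝ)
    (hCp : ∀ zx ∈ Zc, 0 < Cp zx) (hCq : ∀ zx ∈ Zc, 0 < Cq zx)
    (heq : ∀ zx ∈ Zc, ∀ zt ∈ Zc,
      (Cp zx)⁻¹ * Real.exp (-(δ zt zx) / lam)
        = (Cq zx)⁻¹ * Real.exp (-(δ (h zt) (h zx)) / τ)) :
    (∀ zx ∈ Zc, Cp zx = Cq zx) ∧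
    (∀ zx ∈ Zc, ∀ zt ∈ Zc, δ zx zt = (lam / τ) * δ (h zx) (h zt)) :=
  stmt13_general lam τ hlam Zc s δ hδ h Cp Cq hCq heq
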